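/- arXiv:1909.06157 — 7 statements merged into one kernel-verified Lean document; each statement's English description precedes it below -/
import Mathlib

section
/- Let $\theta > 0$, $\mathbf{v} \in \mathbb{R}^d$, and let $f : \mathbb{R}^d \to [0,\infty)$ be measurable. Suppose there exist constants $R > 0$, $r > 0$ and a tail temperature $\theta^{(\mathrm{tail})} \ge 2\theta$ such that $f(\mathbf{c}) \ge R \exp\!\big(-\tfrac{|\mathbf{c}|^2}{2\theta^{(\mathrm{tail})}}\big)$ for all $\|\mathbf{c}\| > r$. Then $\int_{\mathbb{R}^d} f(\mathbf{c})^2 \exp\!\big(\tfrac{|\mathbf{c}-\mathbf{v}|^2}{2\theta}\big)\,d\mathbf{c} = \infty$. In particular, such an $f$ does not belong to the weighted space $V_\omega$ with weight $\omega(\mathbf{c}) = f_{\mathrm{eq}}(\mathbf{c})^{-1}$, where $f_{\mathrm{eq}}$ is any Maxwellian with velocity $\mathbf{v}$ and temperature $\theta$, so the Grad expansion of $f$ cannot converge. -/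
/-!
On the orthant where every coordinate of `c` has sign opposite to that of `v` and modulus
beyond `r`, one has `|c - v| ≥ |c|`, so the tail bound gives
`f² exp(|c - v|²/(2θ)) ≥ R² exp(|c|²/(2θ) - |c|²/θtail) ≥ R²` because `θtail ≥ 2θ`.
The orthant has infinite volume, hence the integral diverges. The `V_ω` norm of `f` for a
Maxwellian of density `ρ` is the same integral times `(2πθ)^(d/2)/ρ`.
-/

open MeasureTheory

theorem enorm_rpow_two_eq_ofReal_sq (x : ℝ) : ‖x‖ₑ ^ (2 : ℝ) = ENNReal.ofReal (x ^ 2) := by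
  rw [ENNReal.rpow_two, Real.enorm_eq_ofReal_abs, ← ENNReal.ofReal_pow (abs_nonneg x), sq_abs]

theorem sq_le_sq_mul_exp_of_hot_tail {θ θtail R s q y : ℝ} (hθ : 0 < θ) (htail : 2 * θ ≤ θtail)
    (hR : 0 ≤ R) (hs : 0 ≤ s) (hsq : s ≤ q) (hy : R * Real.exp (-s / (2 * θtail)) ≤ y) :
    R ^ 2 ≤ y ^ 2 * Real.exp (q / (2 * θ)) := by
  have hθtail : 0 < θtail := by linarith
  have hexp : s / θtail ≤ q / (2 * θ) :=
    (div_le_div_of_nonneg_left hs (by positivity) htail).trans (by gcongr)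
  calc R ^ 2 = (R * Real.exp (-s / (2 * θtail))) ^ 2 * Real.exp (s / θtail) := by
        rw [mul_pow, mul_assoc, ← Real.exp_nat_mul, ← Real.exp_add]
        field_simp
        simp
    _ ≤ y ^ 2 * Real.exp (q / (2 * θ)) := by gcongr

theorem sum_sq_le_sum_sub_sq_of_mul_nonpos {ι : Type*} [Fintype ι] {c v : ι → ℝ}
    (hcv : ∀ i, c i * v i ≤ 0) : ∑ i, c i ^ 2 ≤ ∑ i, (c i - v i) ^ 2 :=
  Finset.sum_le_sum fun i _ => by nlinarith [hcv i, sq_nonneg (v i)]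

theorem abs_le_sqrt_sum_sq {ι : Type*} [Fintype ι] (c : ι → ℝ) (i : ι) :
    |c i| ≤ Real.sqrt (∑ j, c j ^ 2) :=
  Real.abs_le_sqrt (Finset.single_le_sum (fun j _ => sq_nonneg (c j)) (Finset.mem_univ i))

theorem lintegral_eq_top_of_forall_le_on {α : Type*} [MeasurableSpace α] {μ : Measure α}
    {s : Set α} (hs : MeasurableSet s) (hμs : μ s = ⊤) {a : ENNReal} (ha : a ≠ 0)
    {g : α → ENNReal} (hg : ∀ x ∈ s, a ≤ g x) : ∫⁻ x, g x ∂μ = ⊤ :=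
  eq_top_iff.2 <| calc
    ⊤ = ∫⁻ _ in s, a ∂μ := by rw [setLIntegral_const, hμs, ENNReal.mul_top ha]
    _ ≤ ∫⁻ x in s, g x ∂μ := setLIntegral_mono' hs hg
    _ ≤ ∫⁻ x, g x ∂μ := setLIntegral_le_lintegral s g

def opposingOrthant {ι : Type*} (v : ι → ℝ) (M : ℝ) : Set (ι → ℝ) :=
  Set.univ.pi fun i => if 0 ≤ v i then Set.Iic (-M) else Set.Ici M

section opposingOrthant

variable {ι : Type*} (v : ι → ℝ) (M : ℝ)

theorem measurableSet_opposingOrthant [Countable ι] : MeasurableSet (opposingOrthant v M) :=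
  MeasurableSet.univ_pi fun i => by
    split
    · exact measurableSet_Iic
    · exact measurableSet_Ici

theorem volume_opposingOrthant [Fintype ι] [Nonempty ι] : volume (opposingOrthant v M) = ⊤ := by
  have hside : ∀ i, volume (if 0 ≤ v i then Set.Iic (-M) else Set.Ici M) = ⊤ := fun i => by
    split <;> simp
  simp only [opposingOrthant, volume_pi_pi, hside, Finset.prod_const]
  exact ENNReal.top_pow Finset.univ_nonempty.card_ne_zero

variable {v M} {c : ι → ℝ}

theorem le_abs_of_mem_opposingOrthant (hc : c ∈ opposingOrthant v M) (i : ι) : M ≤ |c i| := by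
  have hci : c i ∈ if 0 ≤ v i then Set.Iic (-M) else Set.Ici M := hc i (Set.mem_univ i)
  split at hci
  · exact (le_neg.1 hci).trans (neg_le_abs _)
  · exact hci.trans (le_abs_self _)

theorem mul_nonpos_of_mem_opposingOrthant (hM : 0 ≤ M) (hc : c ∈ opposingOrthant v M) (i : ι) :
    c i * v i ≤ 0 := by
  have hci : c i ∈ if 0 ≤ v i then Set.Iic (-M) else Set.Ici M := hc i (Set.mem_univ i)
  split at hci
  case isTrue hv => exact mul_nonpos_of_nonpos_of_nonneg (by linarith [Set.mem_Iic.1 hci]) hv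
  case isFalse hv => exact mul_nonpos_of_nonneg_of_nonpos (hM.trans hci) (by linarith)

end opposingOrthant

theorem lintegral_sq_mul_exp_eq_top_of_hot_tail {ι : Type*} [Fintype ι] [Nonempty ι]
    {θ θtail R r : ℝ} (hθ : 0 < θ) (hR : 0 < R) (htail : 2 * θ ≤ θtail) (v : ι → ℝ)
    {f : (ι → ℝ) → ℝ}
    (hlb : ∀ c : ι → ℝ, r < Real.sqrt (∑ i, c i ^ 2) →
        R * Real.exp (-(∑ i, c i ^ 2) / (2 * θtail)) ≤ f c) :
    ∫⁻ c, ENNReal.ofReal (f c ^ 2 * Real.exp ((∑ i, (c i - v i) ^ 2) / (2 * θ))) = ⊤ := by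
  have hM : 0 ≤ |r| + 1 := by positivity
  refine lintegral_eq_top_of_forall_le_on (measurableSet_opposingOrthant v _)
    (volume_opposingOrthant v (|r| + 1)) (a := ENNReal.ofReal (R ^ 2)) (ENNReal.ofReal_pos.2 (by positivity)).ne'
    fun c hc => ENNReal.ofReal_le_ofReal ?_
  obtain ⟨i⟩ := ‹Nonempty ι›
  have hr : r < Real.sqrt (∑ i, c i ^ 2) := calc
    r < |r| + 1 := by linarith [le_abs_self r]
    _ ≤ |c i| := le_abs_of_mem_opposingOrthant hc i
    _ ≤ Real.sqrt (∑ i, c i ^ 2) := abs_le_sqrt_sum_sq c i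
  exact sq_le_sq_mul_exp_of_hot_tail hθ htail hR.le (by positivity)
    (sum_sq_le_sum_sub_sq_of_mul_nonpos (mul_nonpos_of_mem_opposingOrthant hM hc)) (hlb c hr)

theorem lintegral_ofReal_sq_mul_lt_top_of_memLp_withDensity {α : Type*} [MeasurableSpace α]
    {μ : Measure α} {f w : α → ℝ} (hw : Measurable w)
    (hf : MemLp f 2 (μ.withDensity fun x => ENNReal.ofReal (w x))) :
    ∫⁻ x, ENNReal.ofReal (f x ^ 2 * w x) ∂μ < ⊤ := by
  have h := lintegral_rpow_enorm_lt_top_of_eLpNorm_lt_top two_ne_zero ENNReal.ofNat_ne_top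
    hf.eLpNorm_lt_top
  rw [lintegral_withDensity_eq_lintegral_mul_non_measurable _ hw.ennreal_ofReal
    (ae_of_all _ fun _ => ENNReal.ofReal_lt_top)] at h
  convert h using 3 with x
  rw [Pi.mul_apply, ENNReal.toReal_ofNat, enorm_rpow_two_eq_ofReal_sq,
    ENNReal.ofReal_mul (sq_nonneg _), mul_comm]

theorem grad_expansion_diverges_of_hot_tail_general
    (d : ℕ) (hd : 0 < d) (θ θtail : ℝ) (hθ : 0 < θ) (v : Fin d → ℝ)
    (f : (Fin d → ℝ) → ℝ)
    (R r : ℝ) (hR : 0 < R) (htail : 2 * θ ≤ θtail)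
    (hlb : ∀ c : Fin d → ℝ, r < Real.sqrt (∑ i, c i ^ 2) →
        R * Real.exp (-(∑ i, c i ^ 2) / (2 * θtail)) ≤ f c) :
    (∫⁻ c : Fin d → ℝ,
        ENNReal.ofReal (f c ^ 2 * Real.exp ((∑ i, (c i - v i) ^ 2) / (2 * θ)))) = ⊤ ∧
    ∀ ρ : ℝ, 0 < ρ →
      ¬ MemLp f 2 (volume.withDensity fun c : Fin d → ℝ =>
          ENNReal.ofReal (ρ / (2 * Real.pi * θ) ^ ((d : ℝ) / 2) *
            Real.exp (-(∑ i, (c i - v i) ^ 2) / (2 * θ)))⁻¹) := by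
  have : Nonempty (Fin d) := Fin.pos_iff_nonempty.1 hd
  have hdiv := lintegral_sq_mul_exp_eq_top_of_hot_tail hθ hR htail v hlb
  refine ⟨hdiv, fun ρ hρ hf => ?_⟩
  set A := ρ / (2 * Real.pi * θ) ^ ((d : ℝ) / 2)
  have hA : 0 < A := by positivity
  have hfin := lintegral_ofReal_sq_mul_lt_top_of_memLp_withDensity (by fun_prop) hf
  have hweight : ∀ c : Fin d → ℝ,
      ENNReal.ofReal (f c ^ 2 * (A * Real.exp (-(∑ i, (c i - v i) ^ 2) / (2 * θ)))⁻¹) =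
        ENNReal.ofReal A⁻¹ *
          ENNReal.ofReal (f c ^ 2 * Real.exp ((∑ i, (c i - v i) ^ 2) / (2 * θ))) := fun c => by
    rw [← ENNReal.ofReal_mul (by positivity), mul_inv, neg_div, Real.exp_neg, inv_inv]
    ring_nf
  rw [lintegral_congr hweight, lintegral_const_mul' _ _ ENNReal.ofReal_ne_top, hdiv,
    ENNReal.mul_top (ENNReal.ofReal_pos.2 (by positivity)).ne'] at hfin
  exact lt_irrefl _ hfin

/-- **Divergence of the Grad expansion for hot tails.** If a nonnegative measurable
distribution `f` on `ℝ^d` (`d ≥ 1`) is bounded below on `‖c‖ > r` by a Gaussian with tail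
temperature `θ_tail ≥ 2θ`, then `∫ f² exp(|c-v|²/(2θ)) dc = ∞`; in particular `f` is not in
the weighted space `V_ω` for the weight `ω = f_eq⁻¹` of any Maxwellian with velocity `v` and
temperature `θ`, so the Grad expansion of `f` cannot converge. -/
theorem grad_expansion_diverges_of_hot_tail
    (d : ℕ) (hd : 0 < d) (θ θtail : ℝ) (hθ : 0 < θ) (v : Fin d → ℝ)
    (f : (Fin d → ℝ) → ℝ) (hf_meas : Measurable f) (hf_nonneg : ∀ c, 0 ≤ f c)
    (R r : ℝ) (hR : 0 < R) (hr : 0 < r) (htail : 2 * θ ≤ θtail)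
    (hlb : ∀ c : Fin d → ℝ, r < Real.sqrt (∑ i, c i ^ 2) →
        R * Real.exp (-(∑ i, c i ^ 2) / (2 * θtail)) ≤ f c) :
    (∫⁻ c : Fin d → ℝ,
        ENNReal.ofReal (f c ^ 2 * Real.exp ((∑ i, (c i - v i) ^ 2) / (2 * θ)))) = ⊤ ∧
    ∀ ρ : ℝ, 0 < ρ →
      ¬ MemLp f 2 (volume.withDensity fun c : Fin d → ℝ =>
          ENNReal.ofReal (ρ / (2 * Real.pi * θ) ^ ((d : ℝ) / 2) *
            Real.exp (-(∑ i, (c i - v i) ^ 2) / (2 * θ)))⁻¹) :=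
  grad_expansion_diverges_of_hot_tail_general d hd θ θtail hθ v f R r hR htail hlb
end

section
/- Let $\theta_1, \theta_2 > 0$ with $\theta_2 > 2\theta_1$, let $\mathbf{v}_1, \mathbf{v}_2 \in \mathbb{R}^3$ and $\rho_1 > 0$ be arbitrary. Then there exists $\bar{\rho} > 0$ such that for every $\rho_2 \in (0, \bar{\rho}]$, the bimodal distribution $f(\mathbf{c}) = \frac{\rho_1}{(2\pi\theta_1)^{3/2}} e^{-|\mathbf{c}-\mathbf{v}_1|^2/(2\theta_1)} + \frac{\rho_2}{(2\pi\theta_2)^{3/2}} e^{-|\mathbf{c}-\mathbf{v}_2|^2/(2\theta_2)}$ has temperature $\theta = \frac{\rho_1\theta_1 + \rho_2\theta_2}{\rho_1+\rho_2} + \frac{\rho_1\rho_2|\mathbf{v}_1-\mathbf{v}_2|^2}{3(\rho_1+\rho_2)^2}$ satisfying $2\theta < \theta_2$, and consequently $\int_{\mathbb{R}^3} f(\mathbf{c})^2 \exp\!\big(\tfrac{|\mathbf{c}-\mathbf{v}|^2}{2\theta}\big)\,d\mathbf{c} = \infty$, where $\mathbf{v} = \frac{\rho_1\mathbf{v}_1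 + \rho_2\mathbf{v}_2}{\rho_1+\rho_2}$; i.e., the Grad expansion of $f$ around its own local Maxwellian diverges. -/
/-!
As `ρ₂ → 0` the temperature `θ` of the mixture tends to `θ₁`, so `2θ < θ₂` once `ρ₂` is small.
Then `f²` is bounded below by the square of the wide component, `∝ exp(-|c - v₂|²/θ₂)`, whose
decay rate `1/θ₂` is smaller than the growth rate `1/(2θ)` of the weight `exp(|c - v|²/(2θ))`.
So the integrand is bounded below by a positive constant outside a ball, a set of infinite volume.
-/

open MeasureTheory Filter Topology Set Real

section SumSq

variable {ι : Type*} [Fintype ι]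

lemma sum_add_sq_le {t : ℝ} (ht : 0 < t) (x y : ι → ℝ) :
    ∑ i, (x i + y i) ^ 2 ≤ (1 + t) * ∑ i, x i ^ 2 + (1 + t⁻¹) * ∑ i, y i ^ 2 := by
  rw [Finset.mul_sum, Finset.mul_sum, ← Finset.sum_add_distrib]
  refine Finset.sum_le_sum fun i _ => ?_
  have hsq : 0 ≤ (t * x i - y i) ^ 2 / t := by positivity
  have hexpand : (1 + t) * x i ^ 2 + (1 + t⁻¹) * y i ^ 2 - (x i + y i) ^ 2
      = (t * x i - y i) ^ 2 / t := by
    field_simp; ring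
  linarith

lemma exists_forall_mul_sum_add_sq_le {α β : ℝ} (hβ : 0 < β) (hβα : β < α) (d : ι → ℝ) :
    ∃ R, ∀ x : ι → ℝ, R ≤ ∑ i, x i ^ 2 →
      β * ∑ i, (x i + d i) ^ 2 ≤ α * ∑ i, x i ^ 2 := by
  set t := (α - β) / (2 * β)
  have ht : 0 < t := div_pos (by linarith) (by linarith)
  have hβt : β * (1 + t) = (α + β) / 2 := by
    simp only [t]; field_simp; ring
  set K := β * (1 + t⁻¹) * ∑ i, d i ^ 2
  refine ⟨2 * K / (α - β), fun x hx => ?_⟩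
  have hK : 2 * K ≤ (∑ i, x i ^ 2) * (α - β) := (div_le_iff₀ (by linarith)).1 hx
  calc β * ∑ i, (x i + d i) ^ 2
      ≤ β * ((1 + t) * ∑ i, x i ^ 2 + (1 + t⁻¹) * ∑ i, d i ^ 2) :=
        mul_le_mul_of_nonneg_left (sum_add_sq_le ht x d) hβ.le
    _ = (α + β) / 2 * ∑ i, x i ^ 2 + K := by rw [← hβt]; ring
    _ ≤ α * ∑ i, x i ^ 2 := by linarith

end SumSq

lemma measure_eq_top_of_isBounded_compl {X : Type*} [PseudoMetricSpace X] [ProperSpace X]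
    [MeasurableSpace X] (μ : Measure X) [IsFiniteMeasureOnCompacts μ] (hμ : μ univ = ⊤)
    {s : Set X} (hs : Bornology.IsBounded sᶜ) : μ s = ⊤ := by
  have := measure_univ_le_add_compl s (μ := μ)
  rw [hμ, top_le_iff, ENNReal.add_eq_top] at this
  exact this.resolve_right hs.measure_lt_top.ne

lemma volume_setOf_le_sum_sub_sq {ι : Type*} [Fintype ι] [Nonempty ι] (R : ℝ) (v : ι → ℝ) :
    volume {c : ι → ℝ | R ≤ ∑ i, (c i - v i) ^ 2} = ⊤ := by
  refine measure_eq_top_of_isBounded_compl _ (measure_univ_of_isAddLeftInvariant _) ?_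
  refine (Metric.isBounded_closedBall (x := v) (r := √R)).subset fun c hc => ?_
  simp only [mem_compl_iff, mem_ofPred_eq, not_le] at hc
  refine (dist_pi_le_iff (sqrt_nonneg _)).2 fun i => ?_
  rw [Real.dist_eq, ← sqrt_sq_eq_abs]
  exact sqrt_le_sqrt <| (Finset.single_le_sum (f := fun j => (c j - v j) ^ 2)
    (fun j _ => sq_nonneg _) (Finset.mem_univ i)).trans hc.le

theorem lintegral_sq_mul_exp_eq_top {ι : Type*} [Fintype ι] [Nonempty ι]
    {f : (ι → ℝ) → ℝ} {C θ θ' : ℝ} {a : ι → ℝ} (v : ι → ℝ)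
    (hC : 0 < C) (hθ : 0 < θ) (hθθ' : 2 * θ < θ')
    (hf : ∀ c, C * exp (-(∑ i, (c i - a i) ^ 2) / (2 * θ')) ≤ f c) :
    ∫⁻ c, ENNReal.ofReal (f c ^ 2 * exp ((∑ i, (c i - v i) ^ 2) / (2 * θ))) = ⊤ := by
  obtain ⟨R, hR⟩ := exists_forall_mul_sum_add_sq_le (inv_pos.2 (by linarith : 0 < θ'))
    ((inv_lt_inv₀ (by linarith) (by linarith)).2 hθθ') (v - a)
  set T := {c : ι → ℝ | R ≤ ∑ i, (c i - v i) ^ 2}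
  have hTmeas : MeasurableSet T := measurableSet_le measurable_const (by fun_prop)
  have hbound : ∀ c ∈ T, C ^ 2 ≤ f c ^ 2 * exp ((∑ i, (c i - v i) ^ 2) / (2 * θ)) := by
    intro c hc
    set A := ∑ i, (c i - v i) ^ 2
    set B := ∑ i, (c i - a i) ^ 2
    have hBA : θ'⁻¹ * B ≤ (2 * θ)⁻¹ * A := by
      simpa only [Pi.sub_apply, sub_add_sub_cancel] using hR (fun i => c i - v i) hc
    calc C ^ 2 ≤ C ^ 2 * exp ((2 * θ)⁻¹ * A - θ'⁻¹ * B) :=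
          le_mul_of_one_le_right (sq_nonneg C) (one_le_exp (by linarith))
      _ = (C * exp (-B / (2 * θ'))) ^ 2 * exp (A / (2 * θ)) := by
          rw [mul_pow, sq (exp _), mul_assoc, ← exp_add, ← exp_add]
          congr 2
          field_simp
          ring
      _ ≤ f c ^ 2 * exp (A / (2 * θ)) := by
          gcongr
          exact hf c
  refine top_le_iff.1 ?_
  calc ⊤ = ENNReal.ofReal (C ^ 2) * volume T := by
        rw [volume_setOf_le_sum_sub_sq, ENNReal.mul_top (by positivity)]
    _ = ∫⁻ _ in T, ENNReal.ofReal (C ^ 2) := (setLIntegral_const T _).symm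
    _ ≤ ∫⁻ c in T, ENNReal.ofReal (f c ^ 2 * exp ((∑ i, (c i - v i) ^ 2) / (2 * θ))) :=
        setLIntegral_mono' hTmeas fun c hc => ENNReal.ofReal_le_ofReal (hbound c hc)
    _ ≤ _ := setLIntegral_le_lintegral T _

lemma tendsto_mixture_temperature {ρ1 : ℝ} (hρ1 : ρ1 ≠ 0) (θ1 θ2 D : ℝ) :
    Tendsto (fun ρ2 => (ρ1 * θ1 + ρ2 * θ2) / (ρ1 + ρ2) + ρ1 * ρ2 * D / (3 * (ρ1 + ρ2) ^ 2))
      (𝓝[>] 0) (𝓝 θ1) := by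
  have hcont : ContinuousAt
      (fun ρ2 => (ρ1 * θ1 + ρ2 * θ2) / (ρ1 + ρ2) + ρ1 * ρ2 * D / (3 * (ρ1 + ρ2) ^ 2)) 0 := by
    fun_prop (disch := simpa)
  simpa [hρ1] using hcont.tendsto.mono_left nhdsWithin_le_nhds

theorem bimodal_grad_divergence_general
    (θ1 θ2 ρ1 : ℝ) (hθ1 : 0 < θ1) (h2θ : 2 * θ1 < θ2) (hρ1 : 0 < ρ1)
    (v1 v2 : Fin 3 → ℝ) :
    ∃ ρbar > (0 : ℝ), ∀ ρ2 : ℝ, 0 < ρ2 → ρ2 ≤ ρbar →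
      ∀ (f : (Fin 3 → ℝ) → ℝ) (v : Fin 3 → ℝ) (θ : ℝ),
        (∀ c, f c =
            ρ1 / (2 * Real.pi * θ1) ^ ((3 : ℝ) / 2) *
              Real.exp (-(∑ i, (c i - v1 i) ^ 2) / (2 * θ1)) +
            ρ2 / (2 * Real.pi * θ2) ^ ((3 : ℝ) / 2) *
              Real.exp (-(∑ i, (c i - v2 i) ^ 2) / (2 * θ2))) →
        v = (ρ1 + ρ2)⁻¹ • (ρ1 • v1 + ρ2 • v2) →
        θ = (ρ1 * θ1 + ρ2 * θ2) / (ρ1 + ρ2) +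
              ρ1 * ρ2 * (∑ i, (v1 i - v2 i) ^ 2) / (3 * (ρ1 + ρ2) ^ 2) →
        2 * θ < θ2 ∧
        (∫⁻ c : Fin 3 → ℝ,
            ENNReal.ofReal (f c ^ 2 *
              Real.exp ((∑ i, (c i - v i) ^ 2) / (2 * θ)))) = ⊤ := by
  have hsmall := (tendsto_mixture_temperature hρ1.ne' θ1 θ2 (∑ i, (v1 i - v2 i) ^ 2)).eventually
    (Ioo_mem_nhds hθ1 (by linarith : θ1 < θ2 / 2))
  obtain ⟨ρbar, hρbar, hsub⟩ := mem_nhdsGT_iff_exists_Ioc_subset.1 hsmall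
  refine ⟨ρbar, hρbar, fun ρ2 hρ2 hρ2le f v θ hf _ hθ => ?_⟩
  obtain ⟨hθpos, hθlt⟩ : 0 < θ ∧ θ < θ2 / 2 := hθ ▸ hsub ⟨hρ2, hρ2le⟩
  have hθ2 : 0 < θ2 := by linarith
  have hnorm : ∀ θ' > 0, 0 < (2 * π * θ') ^ ((3 : ℝ) / 2) := fun θ' hθ' =>
    rpow_pos_of_pos (by positivity) _
  refine ⟨by linarith, lintegral_sq_mul_exp_eq_top (a := v2) (θ' := θ2) v (div_pos hρ2 (hnorm θ2 hθ2))
    hθpos (by linarith) fun c => ?_⟩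
  have := hnorm θ1 hθ1
  rw [hf c]
  exact le_add_of_nonneg_left (by positivity)

/-- **Divergence of the Grad expansion for bimodal distributions.** If `θ₂ > 2θ₁`, then for
any `v₁, v₂` and `ρ₁ > 0` one can choose `ρ₂` so small that the bimodal distribution has
temperature `θ` with `2θ < θ₂`, and consequently `∫ f² exp(|c-v|²/(2θ)) dc = ∞`, i.e. the
Grad expansion of `f` around its own local Maxwellian diverges. -/
theorem bimodal_grad_divergence
    (θ1 θ2 ρ1 : ℝ) (hθ1 : 0 < θ1) (hθ2 : 0 < θ2) (h2θ : 2 * θ1 < θ2) (hρ1 : 0 < ρ1)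
    (v1 v2 : Fin 3 → ℝ) :
    ∃ ρbar > (0 : ℝ), ∀ ρ2 : ℝ, 0 < ρ2 → ρ2 ≤ ρbar →
      ∀ (f : (Fin 3 → ℝ) → ℝ) (v : Fin 3 → ℝ) (θ : ℝ),
        (∀ c, f c =
            ρ1 / (2 * Real.pi * θ1) ^ ((3 : ℝ) / 2) *
              Real.exp (-(∑ i, (c i - v1 i) ^ 2) / (2 * θ1)) +
            ρ2 / (2 * Real.pi * θ2) ^ ((3 : ℝ) / 2) *
              Real.exp (-(∑ i, (c i - v2 i) ^ 2) / (2 * θ2))) →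
        v = (ρ1 + ρ2)⁻¹ • (ρ1 • v1 + ρ2 • v2) →
        θ = (ρ1 * θ1 + ρ2 * θ2) / (ρ1 + ρ2) +
              ρ1 * ρ2 * (∑ i, (v1 i - v2 i) ^ 2) / (3 * (ρ1 + ρ2) ^ 2) →
        2 * θ < θ2 ∧
        (∫⁻ c : Fin 3 → ℝ,
            ENNReal.ofReal (f c ^ 2 *
              Real.exp ((∑ i, (c i - v i) ^ 2) / (2 * θ)))) = ⊤ :=
  bimodal_grad_divergence_general θ1 θ2 ρ1 hθ1 h2θ hρ1 v1 v2
end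

section
/- Let $\nu, L > 0$, $\sigma \in (0,1)$, $\rho^\star, \theta^\star > 0$, $v^\star \in \mathbb{R}$, $R > 0$, $\theta_1^{(\mathrm{tail})} > 0$ and $r > 0$. If $\big(e^{-\nu L \sigma / c} - e^{-\nu L / c}\big)\, \frac{\rho^\star}{(2\pi\theta^\star)^{3/2}} \exp\!\big(-\tfrac{(c - v^\star)^2}{2\theta^\star}\big) \le R \exp\!\big(-\tfrac{c^2}{2\theta_1^{(\mathrm{tail})}}\big)$ for all $c > r$, then $\theta^\star \le \theta_1^{(\mathrm{tail})}$. That is, even though the prefactor $K_\sigma(\nu L / c) = e^{-\nu L\sigma/c} - e^{-\nu L/c}$ tends to $0$ as $c \to \infty$, the exponentials dominate and Holway's inequality forces the temperature bound. -/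
/-!
Suppose `θ⋆ > θ₁`. For `c > r` the prefactor is at least `κ / c` for a constant `κ > 0`, because
`e^{-aσ} - e^{-a} = e^{-a} (e^{(1-σ)a} - 1) ≥ (1-σ) a e^{-a}`. But the ratio of the Maxwellian of
temperature `θ⋆` to `c` times the one of temperature `θ₁` is `exp` of a quadratic in `c` with
positive leading coefficient `1/(2θ₁) - 1/(2θ⋆)`, minus `log c`, so it tends to infinity and the
assumed inequality fails for large `c`.
-/

open Real Filter

lemma mul_exp_neg_le_exp_neg_mul_sub_exp_neg (σ a : ℝ) :
    (1 - σ) * a * exp (-a) ≤ exp (-(a * σ)) - exp (-a) := by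
  have hsplit : exp (-(a * σ)) = exp (-a) * exp ((1 - σ) * a) := by
    rw [← exp_add]; ring_nf
  have := add_one_le_exp ((1 - σ) * a)
  rw [hsplit]
  nlinarith [exp_pos (-a)]

lemma div_le_exp_neg_mul_div_sub_exp_neg_div {σ k r c : ℝ} (hσ : σ ≤ 1) (hk : 0 ≤ k)
    (hr : 0 < r) (hrc : r ≤ c) :
    (1 - σ) * k * exp (-(k / r)) / c ≤ exp (-(k * σ / c)) - exp (-(k / c)) := by
  have hc : 0 < c := hr.trans_le hrc
  have hexp : exp (-(k / r)) ≤ exp (-(k / c)) :=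
    exp_le_exp.mpr (neg_le_neg (div_le_div_of_nonneg_left hk hr hrc))
  calc (1 - σ) * k * exp (-(k / r)) / c = (1 - σ) * (k / c) * exp (-(k / r)) := by ring
    _ ≤ (1 - σ) * (k / c) * exp (-(k / c)) := by
        have : 0 ≤ (1 - σ) * (k / c) := mul_nonneg (sub_nonneg.mpr hσ) (div_nonneg hk hc.le)
        gcongr
    _ ≤ exp (-(k * σ / c)) - exp (-(k / c)) := by
        rw [mul_div_right_comm]
        exact mul_exp_neg_le_exp_neg_mul_sub_exp_neg σ (k / c)

lemma tendsto_exp_div_mul_exp_atTop {θ θ' : ℝ} (hθ' : 0 < θ') (hθ : θ' < θ) (v : ℝ) :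
    Tendsto (fun c => exp (-(c - v) ^ 2 / (2 * θ)) / (c * exp (-c ^ 2 / (2 * θ')))) atTop
      atTop := by
  set ε := 1 / (2 * θ') - 1 / (2 * θ)
  have hε : 0 < ε := sub_pos.mpr (one_div_lt_one_div_of_lt (by positivity) (by linarith))
  have hquad : Tendsto (fun c => c * (ε * c + (v / θ - 1)) - v ^ 2 / (2 * θ)) atTop atTop :=
    (tendsto_id.atTop_mul_atTop₀ ((tendsto_id.const_mul_atTop hε).atTop_add
      tendsto_const_nhds)).atTop_add tendsto_const_nhds
  refine (tendsto_exp_atTop.comp (f := fun c => -(c - v) ^ 2 / (2 * θ) + c ^ 2 / (2 * θ') - log c)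
    (tendsto_atTop_mono' _ ?_ hquad)).congr' ?_
  · filter_upwards [eventually_gt_atTop 0] with c hc
    have := log_le_sub_one_of_pos hc
    have hθ0 : θ ≠ 0 := (hθ'.trans hθ).ne'
    have hθ'0 : θ' ≠ 0 := hθ'.ne'
    have hexpand : -(c - v) ^ 2 / (2 * θ) + c ^ 2 / (2 * θ') - log c
        = c * (ε * c + v / θ) - v ^ 2 / (2 * θ) - log c := by
      simp only [ε]; field_simp; ring
    rw [hexpand]
    linarith
  · filter_upwards [eventually_gt_atTop 0] with c hc
    rw [Function.comp_apply, exp_sub, exp_add, exp_log hc,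
      show -c ^ 2 / (2 * θ') = -(c ^ 2 / (2 * θ')) by ring, exp_neg]
    field_simp

theorem holway_temperature_bound_general
    (ν L σ ρs θs vs R θ1tail r : ℝ)
    (hν : 0 < ν) (hL : 0 < L) (hσ : σ ∈ Set.Ioo (0 : ℝ) 1)
    (hρs : 0 < ρs) (hθs : 0 < θs) (hθ1 : 0 < θ1tail) (hr : 0 < r)
    (hle : ∀ c : ℝ, r < c →
        (Real.exp (-(ν * L * σ / c)) - Real.exp (-(ν * L / c))) *
          (ρs / (2 * Real.pi * θs) ^ ((3 : ℝ) / 2) *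
            Real.exp (-(c - vs) ^ 2 / (2 * θs)))
        ≤ R * Real.exp (-c ^ 2 / (2 * θ1tail))) :
    θs ≤ θ1tail := by
  by_contra! hθ
  set A := ρs / (2 * π * θs) ^ ((3 : ℝ) / 2)
  have hA : 0 < A := div_pos hρs (rpow_pos_of_pos (by positivity) _)
  set κ := (1 - σ) * (ν * L) * exp (-(ν * L / r)) * A
  have hκ : 0 < κ := mul_pos (mul_pos (mul_pos (sub_pos.mpr hσ.2) (by positivity)) (exp_pos _)) hA
  obtain ⟨c, hratio, hrc⟩ := (((tendsto_exp_div_mul_exp_atTop hθ1 hθ vs).eventually_gt_atTop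
    (R / κ)).and (eventually_gt_atTop r)).exists
  have hc : 0 < c := hr.trans hrc
  have hupper : κ / c * exp (-(c - vs) ^ 2 / (2 * θs)) ≤ R * exp (-c ^ 2 / (2 * θ1tail)) := by
    refine le_trans ?_ (hle c hrc)
    calc κ / c * exp (-(c - vs) ^ 2 / (2 * θs))
        = (1 - σ) * (ν * L) * exp (-(ν * L / r)) / c * (A * exp (-(c - vs) ^ 2 / (2 * θs))) := by
          ring
      _ ≤ _ := mul_le_mul_of_nonneg_right
          (div_le_exp_neg_mul_div_sub_exp_neg_div hσ.2.le (by positivity) hr hrc.le) (by positivity)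
  rw [div_lt_div_iff₀ hκ (by positivity)] at hratio
  rw [div_mul_eq_mul_div, div_le_iff₀ hc] at hupper
  linarith

/-- **Holway's temperature bound.** Even though the prefactor
`K_σ(νL/c) = e^{-νLσ/c} - e^{-νL/c}` tends to `0` as `c → ∞`, the exponentials dominate:
if `K_σ(νL/c) · ρ⋆/(2πθ⋆)^{3/2} · exp(-(c-v⋆)²/(2θ⋆)) ≤ R exp(-c²/(2θ₁^tail))` for all
`c > r`, then `θ⋆ ≤ θ₁^tail`. -/
theorem holway_temperature_bound
    (ν L σ ρs θs vs R θ1tail r : ℝ)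
    (hν : 0 < ν) (hL : 0 < L) (hσ : σ ∈ Set.Ioo (0 : ℝ) 1)
    (hρs : 0 < ρs) (hθs : 0 < θs) (hR : 0 < R) (hθ1 : 0 < θ1tail) (hr : 0 < r)
    (hle : ∀ c : ℝ, r < c →
        (Real.exp (-(ν * L * σ / c)) - Real.exp (-(ν * L / c))) *
          (ρs / (2 * Real.pi * θs) ^ ((3 : ℝ) / 2) *
            Real.exp (-(c - vs) ^ 2 / (2 * θs)))
        ≤ R * Real.exp (-c ^ 2 / (2 * θ1tail))) :
    θs ≤ θ1tail :=
  holway_temperature_bound_general ν L σ ρs θs vs R θ1tail r hν hL hσ hρs hθs hθ1 hr hle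
end

section
/- For every real $x > 0$: $\frac{(5x-1)(x+3)}{16x} < 2$ if and only if $x < \frac{9}{5} + \frac{4\sqrt{6}}{5}$. Consequently, for a normal shock with upstream temperature $\theta_1 = 1$ and downstream temperature $\theta_2 = \frac{(5\mathit{Ma}^2-1)(\mathit{Ma}^2+3)}{16\mathit{Ma}^2}$ given by the Rankine–Hugoniot conditions, the convergence condition $\theta_2 < 2\theta_1$ holds exactly for Mach numbers $\mathit{Ma} < \sqrt{\tfrac{9}{5} + \tfrac{4\sqrt{6}}{5}} \approx 1.939$ (and not $1.851$ as originally computed by Holway). -/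
lemma aux_main : ∀ x : ℝ, 0 < x →
    ((5 * x - 1) * (x + 3) / (16 * x) < 2 ↔ x < 9 / 5 + 4 * Real.sqrt 6 / 5) := by
  intro x hx
  have h6 : Real.sqrt 6 ^ 2 = 6 := Real.sq_sqrt (by norm_num)
  have h6pos : (0:ℝ) < Real.sqrt 6 := Real.sqrt_pos.mpr (by norm_num)
  have h6gt : (2:ℝ) < Real.sqrt 6 := by
    nlinarith [Real.sq_sqrt (show (0:ℝ) ≤ 6 by norm_num), Real.sqrt_nonneg 6]
  rw [div_lt_iff₀ (by linarith)]
  constructor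
  · intro h
    nlinarith [sq_nonneg (x - (9/5 + 4 * Real.sqrt 6 / 5)), sq_nonneg (x + (9/5 - 4 * Real.sqrt 6 / 5))]
  · intro h
    nlinarith [sq_nonneg (x - (9/5 + 4 * Real.sqrt 6 / 5))]

/-- **Holway's critical Mach number, corrected.** For `x > 0`,
`(5x-1)(x+3)/(16x) < 2 ↔ x < 9/5 + 4√6/5`. Consequently, with upstream temperature
`θ₁ = 1` and downstream temperature `θ₂ = (5Ma²-1)(Ma²+3)/(16Ma²)`, the convergence
condition `θ₂ < 2θ₁` holds exactly for `Ma < √(9/5 + 4√6/5) ≈ 1.939`. -/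
theorem critical_mach_number :
    (∀ x : ℝ, 0 < x →
      ((5 * x - 1) * (x + 3) / (16 * x) < 2 ↔ x < 9 / 5 + 4 * Real.sqrt 6 / 5)) ∧
    (∀ Ma : ℝ, 0 < Ma →
      ((5 * Ma ^ 2 - 1) * (Ma ^ 2 + 3) / (16 * Ma ^ 2) < 2 * 1 ↔
        Ma < Real.sqrt (9 / 5 + 4 * Real.sqrt 6 / 5))) := by
  refine ⟨aux_main, fun Ma hMa => ?_⟩
  have h := aux_main (Ma ^ 2) (by positivity)
  rw [show (2:ℝ) * 1 = 2 by norm_num, h, Real.lt_sqrt hMa.le]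
end

section
/- For $\mathit{Ma} > 1$ and $\kappa \in [0,1]$, consider the Mott–Smith bimodal distribution with parameters $\rho_1(\kappa) = 1-\kappa$, $\mathbf{v}_1 = (\sqrt{5/3}\,\mathit{Ma}, 0, 0)$, $\theta_1 = 1$, $\rho_2(\kappa) = \kappa\,\frac{4\mathit{Ma}^2}{\mathit{Ma}^2+3}$, $\mathbf{v}_2 = (\sqrt{5/3}\,\frac{\mathit{Ma}^2+3}{4\mathit{Ma}}, 0, 0)$, $\theta_2 = \frac{(5\mathit{Ma}^2-1)(\mathit{Ma}^2+3)}{16\mathit{Ma}^2}$, and let $\theta(\kappa) = \frac{\rho_1(\kappa)\theta_1 + \rho_2(\kappa)\theta_2}{\rho_1(\kappa)+\rho_2(\kappa)} + \frac{\rho_1(\kappa)\rho_2(\kappa)\,|\mathbf{v}_1-\mathbf{v}_2|^2}{3(\rho_1(\kappa)+\rho_2(\kappa))^2}$ be its temperature. Then $\theta(\kappa) \to \theta_1 = 1$ as $\kappa \to 0^+$, and if $\mathit{Ma}^2 > \frac{9}{5} + \frac{4\sqrt{6}}{5}$ (so that $\theta_2 > 2$), there exists $\kappa_0 \in (0,1)$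 such that $2\theta(\kappa) < \theta_2$ for all $\kappa \in (0, \kappa_0)$; hence the Grad expansion of the bimodal distribution diverges there. -/
open MeasureTheory

private lemma quad_lb (a b w u t : ℝ) (hb : 0 < b) (hab : b < a) :
    -(a * b * (w - u) ^ 2 / (a - b)) ≤ a * (t - w) ^ 2 - b * (t - u) ^ 2 := by
  have hpos : 0 < a - b := sub_pos.2 hab
  rw [← neg_div, div_le_iff₀ hpos]
  nlinarith [sq_nonneg ((a - b) * t - (a * w - b * u))]

/-- **Divergence of the Grad expansion for Mott–Smith shock profiles.** For the Mott–Smith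
bimodal distribution of a shock of Mach number `Ma`, the temperature `θ(κ)` tends to
`θ₁ = 1` as `κ → 0⁺`; if `Ma² > 9/5 + 4√6/5` (so that `θ₂ > 2`), then there is `κ₀ ∈ (0,1)`
such that `2θ(κ) < θ₂` for all `κ ∈ (0, κ₀)`, and hence the Grad expansion of the bimodal
distribution diverges there. -/
theorem mott_smith_grad_divergence
    (Ma : ℝ) (hMa : 1 < Ma)
    (θ2 : ℝ) (hθ2 : θ2 = (5 * Ma ^ 2 - 1) * (Ma ^ 2 + 3) / (16 * Ma ^ 2))
    (v1 v2 : Fin 3 → ℝ)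
    (hv1 : v1 = fun i => if i = 0 then Real.sqrt (5 / 3) * Ma else 0)
    (hv2 : v2 = fun i => if i = 0 then Real.sqrt (5 / 3) * (Ma ^ 2 + 3) / (4 * Ma) else 0)
    (ρ1 ρ2 : ℝ → ℝ)
    (hρ1 : ∀ κ, ρ1 κ = 1 - κ)
    (hρ2 : ∀ κ, ρ2 κ = κ * (4 * Ma ^ 2 / (Ma ^ 2 + 3)))
    (θ : ℝ → ℝ)
    (hθ : ∀ κ, θ κ = (ρ1 κ * 1 + ρ2 κ * θ2) / (ρ1 κ + ρ2 κ) +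
        ρ1 κ * ρ2 κ * (∑ i, (v1 i - v2 i) ^ 2) / (3 * (ρ1 κ + ρ2 κ) ^ 2))
    (v : ℝ → Fin 3 → ℝ)
    (hv : ∀ κ, v κ = (ρ1 κ + ρ2 κ)⁻¹ • (ρ1 κ • v1 + ρ2 κ • v2))
    (f : ℝ → (Fin 3 → ℝ) → ℝ)
    (hf : ∀ κ c, f κ c =
        ρ1 κ / (2 * Real.pi * 1) ^ ((3 : ℝ) / 2) *
          Real.exp (-(∑ i, (c i - v1 i) ^ 2) / (2 * 1)) +
        ρ2 κ / (2 * Real.pi * θ2) ^ ((3 : ℝ) / 2) *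
          Real.exp (-(∑ i, (c i - v2 i) ^ 2) / (2 * θ2))) :
    Filter.Tendsto θ (nhdsWithin 0 (Set.Ioi 0)) (nhds 1) ∧
    (9 / 5 + 4 * Real.sqrt 6 / 5 < Ma ^ 2 →
      ∃ κ0 ∈ Set.Ioo (0 : ℝ) 1, ∀ κ ∈ Set.Ioo (0 : ℝ) κ0,
        2 * θ κ < θ2 ∧
        (∫⁻ c : Fin 3 → ℝ,
            ENNReal.ofReal (f κ c ^ 2 *
              Real.exp ((∑ i, (c i - v κ i) ^ 2) / (2 * θ κ)))) = ⊤) := by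
  have hMa0 : 0 < Ma := lt_trans one_pos hMa
  have hMa2 : 1 < Ma ^ 2 := by nlinarith
  have hB : 0 < 4 * Ma ^ 2 / (Ma ^ 2 + 3) := by positivity
  have hθ2pos : 0 < θ2 := by
    rw [hθ2]
    have h1 : 0 < 5 * Ma ^ 2 - 1 := by nlinarith
    positivity
  set S : ℝ := ∑ i, (v1 i - v2 i) ^ 2 with hS
  set B : ℝ := 4 * Ma ^ 2 / (Ma ^ 2 + 3) with hBdef
  have hθfun : ∀ κ, θ κ = ((1 - κ) * 1 + κ * B * θ2) / ((1 - κ) + κ * B) +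
      (1 - κ) * (κ * B) * S / (3 * ((1 - κ) + κ * B) ^ 2) := by
    intro κ; rw [hθ, hρ1, hρ2]
  -- Part 1: tendsto
  have htend : Filter.Tendsto θ (nhdsWithin 0 (Set.Ioi 0)) (nhds 1) := by
    have hcont : ContinuousAt
        (fun κ : ℝ => ((1 - κ) * 1 + κ * B * θ2) / ((1 - κ) + κ * B) +
          (1 - κ) * (κ * B) * S / (3 * ((1 - κ) + κ * B) ^ 2)) 0 := by
      apply ContinuousAt.add
      · exact ContinuousAt.div (by fun_prop) (by fun_prop) (by norm_num)
      · exact ContinuousAt.div (by fun_prop) (by fun_prop) (by norm_num)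
    have h0 : ((1 - (0:ℝ)) * 1 + 0 * B * θ2) / ((1 - 0) + 0 * B) +
        (1 - 0) * (0 * B) * S / (3 * ((1 - 0) + 0 * B) ^ 2) = 1 := by norm_num
    have := hcont.tendsto
    rw [h0] at this
    exact (this.congr fun κ => (hθfun κ).symm).mono_left nhdsWithin_le_nhds
  refine ⟨htend, fun hMach => ?_⟩
  -- θ2 > 2
  have h6 : Real.sqrt 6 ^ 2 = 6 := Real.sq_sqrt (by norm_num)
  have h6' : (0:ℝ) ≤ Real.sqrt 6 := Real.sqrt_nonneg 6
  have hθ2gt2 : 2 < θ2 := by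
    rw [hθ2, lt_div_iff₀ (by positivity)]
    have h1 : 0 < Ma ^ 2 - (9 + 4 * Real.sqrt 6) / 5 := by nlinarith
    have h2 : 0 < Ma ^ 2 - (9 - 4 * Real.sqrt 6) / 5 := by nlinarith
    nlinarith [mul_pos h1 h2]
  -- eventually θ κ < θ2 / 2
  have hev : {κ : ℝ | θ κ < θ2 / 2} ∈ nhdsWithin 0 (Set.Ioi 0) :=
    htend.eventually (Filter.Tendsto.eventually_lt_const (by linarith) Filter.tendsto_id)
  rw [mem_nhdsGT_iff_exists_Ioo_subset] at hev
  obtain ⟨u, hu, hsub⟩ := hev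
  rw [Set.mem_Ioi] at hu
  refine ⟨min u 1 / 2, ⟨by positivity, by
    have : min u 1 ≤ 1 := min_le_right u 1
    linarith⟩, ?_⟩
  intro κ hκ
  obtain ⟨hκ0, hκlt⟩ := hκ
  have hκu : κ < u := lt_of_lt_of_le hκlt (by
    have : min u 1 ≤ u := min_le_left u 1
    linarith)
  have hκ1 : κ < 1 := lt_of_lt_of_le hκlt (by
    have : min u 1 ≤ 1 := min_le_right u 1
    linarith)
  have hθhalf : θ κ < θ2 / 2 := hsub ⟨hκ0, hκu⟩
  have h2θ : 2 * θ κ < θ2 := by linarith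
  refine ⟨h2θ, ?_⟩
  -- positivity of θ κ
  have h1κ : 0 < 1 - κ := by linarith
  have hθpos : 0 < θ κ := by
    rw [hθfun κ]
    have hden : 0 < (1 - κ) + κ * B := by positivity
    refine add_pos_of_pos_of_nonneg (div_pos ?_ hden) ?_
    · exact add_pos (by linarith) (mul_pos (mul_pos hκ0 hB) hθ2pos)
    · exact div_nonneg (mul_nonneg (mul_nonneg h1κ.le (by positivity))
        (Finset.sum_nonneg fun i _ => sq_nonneg _)) (by positivity)
  have hρ2pos : 0 < ρ2 κ := by rw [hρ2]; exact mul_pos hκ0 hB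
  -- the constant lower bound
  have hrp2 : (0:ℝ) < (2 * Real.pi * θ2) ^ ((3:ℝ)/2) :=
    Real.rpow_pos_of_pos (by positivity) _
  have hrp1 : (0:ℝ) < (2 * Real.pi * 1) ^ ((3:ℝ)/2) :=
    Real.rpow_pos_of_pos (by positivity) _
  set A : ℝ := ρ2 κ / (2 * Real.pi * θ2) ^ ((3:ℝ)/2) with hAdef
  have hA : 0 < A := div_pos hρ2pos hrp2
  have ha : (0:ℝ) < (2 * θ κ)⁻¹ := by positivity
  have hb : (0:ℝ) < θ2⁻¹ := by positivity
  have hab : θ2⁻¹ < (2 * θ κ)⁻¹ := by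
    apply inv_strictAnti₀ (by positivity) h2θ
  set L : ℝ := ∑ i, ((2 * θ κ)⁻¹ * θ2⁻¹ * (v κ i - v2 i) ^ 2 / ((2 * θ κ)⁻¹ - θ2⁻¹)) with hL
  set K : ℝ := A ^ 2 * Real.exp (-L) with hK
  have hKpos : 0 < K := by positivity
  have hpt : ∀ c : Fin 3 → ℝ,
      K ≤ f κ c ^ 2 * Real.exp ((∑ i, (c i - v κ i) ^ 2) / (2 * θ κ)) := by
    intro c
    have h1 : A * Real.exp (-(∑ i, (c i - v2 i) ^ 2) / (2 * θ2)) ≤ f κ c := by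
      rw [hf κ c, hρ1]
      have hnn : 0 ≤ (1 - κ) / (2 * Real.pi * 1) ^ ((3:ℝ)/2) *
          Real.exp (-(∑ i, (c i - v1 i) ^ 2) / (2 * 1)) :=
        mul_nonneg (div_nonneg h1κ.le hrp1.le) (Real.exp_nonneg _)
      linarith
    have h2 : (A * Real.exp (-(∑ i, (c i - v2 i) ^ 2) / (2 * θ2))) ^ 2 *
          Real.exp ((∑ i, (c i - v κ i) ^ 2) / (2 * θ κ)) ≤
        f κ c ^ 2 * Real.exp ((∑ i, (c i - v κ i) ^ 2) / (2 * θ κ)) :=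
      mul_le_mul_of_nonneg_right (pow_le_pow_left₀ (by positivity) h1 2) (Real.exp_nonneg _)
    refine le_trans ?_ h2
    rw [mul_pow, ← Real.exp_nat_mul, mul_assoc, ← Real.exp_add]
    have h4 : -L ≤ (2:ℕ) * (-(∑ i, (c i - v2 i) ^ 2) / (2 * θ2)) +
        (∑ i, (c i - v κ i) ^ 2) / (2 * θ κ) := by
      have hrw : (2:ℕ) * (-(∑ i, (c i - v2 i) ^ 2) / (2 * θ2)) +
          (∑ i, (c i - v κ i) ^ 2) / (2 * θ κ) =
          ∑ i, ((2 * θ κ)⁻¹ * (c i - v κ i) ^ 2 - θ2⁻¹ * (c i - v2 i) ^ 2) := by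
        rw [Finset.sum_sub_distrib, ← Finset.mul_sum, ← Finset.mul_sum]
        field_simp
        ring
      rw [hrw, hL, ← Finset.sum_neg_distrib]
      exact Finset.sum_le_sum fun i _ => quad_lb _ _ _ _ _ hb hab
    calc K = A ^ 2 * Real.exp (-L) := hK
      _ ≤ _ := mul_le_mul_of_nonneg_left (Real.exp_le_exp.2 h4) (by positivity)
  -- conclude the integral is infinite
  rw [eq_top_iff]
  calc (⊤ : ENNReal) = ENNReal.ofReal K * volume (Set.univ : Set (Fin 3 → ℝ)) := by
        rw [show volume (Set.univ : Set (Fin 3 → ℝ)) = ⊤ by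
          simp [MeasureTheory.Measure.pi_univ, Real.volume_univ]]
        rw [ENNReal.mul_top ((ENNReal.ofReal_pos.2 hKpos).ne')]
    _ = ∫⁻ _ : Fin 3 → ℝ, ENNReal.ofReal K := by rw [lintegral_const]
    _ ≤ _ := lintegral_mono fun c => ENNReal.ofReal_le_ofReal (hpt c)
end

section
/- Let $\theta_l, \theta_r > 0$, $\rho_l = \frac{2\sqrt{\theta_r}}{\sqrt{\theta_l}+\sqrt{\theta_r}}$, $\rho_r = \frac{2\sqrt{\theta_l}}{\sqrt{\theta_l}+\sqrt{\theta_r}}$, and let $f(c) = \frac{\rho_l}{\sqrt{2\pi\theta_l}} e^{-c^2/(2\theta_l)}$ for $c > 0$, $f(c) = \frac{\rho_r}{\sqrt{2\pi\theta_r}} e^{-c^2/(2\theta_r)}$ for $c < 0$. Then the temperature of $f$ equals the geometric mean of the wall temperatures: $\int_{\mathbb{R}} c^2 f(c)\,dc \Big/ \int_{\mathbb{R}} f(c)\,dc = \sqrt{\theta_l\,\theta_r}$. -/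
/-!
On each half-line `f` is a Maxwellian `ρ / √(2πθ) · exp (-c² / (2θ))`, an even function whose
integral over a half-line is `ρ / 2` and whose second moment there is `ρ θ / 2` (from
`Γ (1/2) = √π` and `Γ (3/2) = √π / 2`). Hence the temperature of `f` is the density-weighted mean
`(ρ_l θ_l + ρ_r θ_r) / (ρ_l + ρ_r)`, and for the given densities `ρ_l + ρ_r = 2` while
`ρ_l θ_l + ρ_r θ_r = 2 √θ_l √θ_r (√θ_l + √θ_r) / (√θ_l + √θ_r)`.
-/

open MeasureTheory Real Set

theorem integral_Ioi_sq_mul_exp_neg_mul_sq {b : ℝ} (hb : 0 < b) :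
    ∫ x in Ioi (0 : ℝ), x ^ 2 * exp (-b * x ^ 2) = √(π / b) / (4 * b) := by
  have h := integral_rpow_mul_exp_neg_mul_rpow (p := 2) (q := 2) two_pos (by norm_num) hb
  have hΓ : Gamma (3 / 2) = √π / 2 := by
    convert Gamma_nat_add_one_add_half 0 using 2 <;> norm_num
  simp only [rpow_two] at h
  rw [h, show (2 + 1 : ℝ) / 2 = 3 / 2 by norm_num, hΓ,
    show -(2 + 1 : ℝ) / 2 = -1 + -(1 / 2) by norm_num, rpow_add hb, rpow_neg_one,
    rpow_neg hb.le, ← sqrt_eq_rpow, sqrt_div' _ hb.le]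
  field_simp
  ring

theorem integral_eq_integral_Ioi_comp_neg_add_integral_Ioi {E : Type*} [NormedAddCommGroup E]
    [NormedSpace ℝ E] {f g h : ℝ → E} (hg : IntegrableOn g (Iio 0)) (hh : IntegrableOn h (Ioi 0))
    (hfg : EqOn f g (Iio 0)) (hfh : EqOn f h (Ioi 0)) :
    ∫ x, f x = (∫ x in Ioi 0, g (-x)) + ∫ x in Ioi 0, h x := by
  have hf_Iic : IntegrableOn f (Iic 0) :=
    (integrableOn_Iic_iff_integrableOn_Iio (f := f)).mpr (hg.congr_fun hfg.symm measurableSet_Iio)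
  rw [← intervalIntegral.integral_Iic_add_Ioi hf_Iic (hh.congr_fun hfh.symm measurableSet_Ioi),
    integral_Iic_eq_integral_Iio, setIntegral_congr_fun measurableSet_Iio hfg,
    setIntegral_congr_fun measurableSet_Ioi hfh, integral_comp_neg_Ioi, neg_zero,
    integral_Iic_eq_integral_Iio]

noncomputable def maxwellian (ρ θ c : ℝ) : ℝ :=
  ρ / √(2 * π * θ) * exp (-c ^ 2 / (2 * θ))

section Maxwellian

variable {ρ θ : ℝ}

theorem maxwellian_neg (c : ℝ) : maxwellian ρ θ (-c) = maxwellian ρ θ c := by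
  simp [maxwellian]

theorem maxwellian_eq (c : ℝ) :
    maxwellian ρ θ c = ρ / √(2 * π * θ) * exp (-(2 * θ)⁻¹ * c ^ 2) := by
  rw [maxwellian]
  congr 2
  ring

theorem integrable_maxwellian (hθ : 0 < θ) : Integrable (maxwellian ρ θ) := by
  simp_rw [funext maxwellian_eq]
  exact (integrable_exp_neg_mul_sq (by positivity)).const_mul _

theorem integrable_sq_mul_maxwellian (hθ : 0 < θ) :
    Integrable fun c ↦ c ^ 2 * maxwellian ρ θ c := by
  have h := integrable_rpow_mul_exp_neg_mul_sq (b := (2 * θ)⁻¹) (by positivity) (s := 2)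
    (by norm_num)
  simp only [rpow_two] at h
  convert h.const_mul (ρ / √(2 * π * θ)) using 2 with c
  rw [maxwellian_eq]
  ring

theorem integral_Ioi_maxwellian (hθ : 0 < θ) :
    ∫ c in Ioi 0, maxwellian ρ θ c = ρ / 2 := by
  have hs : √(2 * π * θ) ≠ 0 := by positivity
  simp_rw [maxwellian_eq]
  rw [integral_const_mul, integral_gaussian_Ioi, div_inv_eq_mul,
    show π * (2 * θ) = 2 * π * θ by ring]
  field_simp

theorem integral_Ioi_sq_mul_maxwellian (hθ : 0 < θ) :
    ∫ c in Ioi 0, c ^ 2 * maxwellian ρ θ c = ρ * θ / 2 := by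
  have hs : √(2 * π * θ) ≠ 0 := by positivity
  simp_rw [maxwellian_eq, mul_left_comm _ (ρ / _)]
  rw [integral_const_mul, integral_Ioi_sq_mul_exp_neg_mul_sq (by positivity), div_inv_eq_mul,
    show π * (2 * θ) = 2 * π * θ by ring]
  field_simp
  ring

end Maxwellian

/-- **Temperature of the free-molecular solution.** The piecewise half-Maxwellian
free-molecular distribution between walls of temperatures `θ_l, θ_r` has temperature equal
to the geometric mean `√(θ_l θ_r)` of the wall temperatures. -/
theorem free_molecular_temperature
    (θl θr : ℝ) (hθl : 0 < θl) (hθr : 0 < θr)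
    (ρl ρr : ℝ)
    (hρl : ρl = 2 * Real.sqrt θr / (Real.sqrt θl + Real.sqrt θr))
    (hρr : ρr = 2 * Real.sqrt θl / (Real.sqrt θl + Real.sqrt θr))
    (f : ℝ → ℝ)
    (hfp : ∀ c : ℝ, 0 < c →
        f c = ρl / Real.sqrt (2 * Real.pi * θl) * Real.exp (-c ^ 2 / (2 * θl)))
    (hfn : ∀ c : ℝ, c < 0 →
        f c = ρr / Real.sqrt (2 * Real.pi * θr) * Real.exp (-c ^ 2 / (2 * θr))) :
    (∫ c : ℝ, c ^ 2 * f c) / (∫ c : ℝ, f c) = Real.sqrt (θl * θr) := by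
  have hmass : ∫ c, f c = ρr / 2 + ρl / 2 := by
    rw [integral_eq_integral_Ioi_comp_neg_add_integral_Ioi (integrable_maxwellian hθr).integrableOn
      (integrable_maxwellian hθl).integrableOn hfn hfp]
    simp only [maxwellian_neg, integral_Ioi_maxwellian hθr, integral_Ioi_maxwellian hθl]
  have henergy : ∫ c, c ^ 2 * f c = ρr * θr / 2 + ρl * θl / 2 := by
    rw [integral_eq_integral_Ioi_comp_neg_add_integral_Ioi
      (integrable_sq_mul_maxwellian hθr).integrableOn
      (integrable_sq_mul_maxwellian hθl).integrableOn
      (fun c hc ↦ by rw [hfn c hc]; rfl) (fun c hc ↦ by rw [hfp c hc]; rfl)]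
    simp only [neg_sq, maxwellian_neg, integral_Ioi_sq_mul_maxwellian hθr,
      integral_Ioi_sq_mul_maxwellian hθl]
  have hsl : 0 < √θl := sqrt_pos.mpr hθl
  have hsr : 0 < √θr := sqrt_pos.mpr hθr
  rw [henergy, hmass, hρl, hρr, sqrt_mul hθl.le]
  field_simp
  linear_combination (-√θl) * sq_sqrt hθr.le + (-√θr) * sq_sqrt hθl.le
end

section
/- Let $\theta_l, \theta_r > 0$ with $\theta_r > 4\theta_l$, let $\rho_l = \frac{2\sqrt{\theta_r}}{\sqrt{\theta_l}+\sqrt{\theta_r}}$, $\rho_r = \frac{2\sqrt{\theta_l}}{\sqrt{\theta_l}+\sqrt{\theta_r}}$, and let $f(c) = \frac{\rho_l}{\sqrt{2\pi\theta_l}} e^{-c^2/(2\theta_l)}$ for $c > 0$, $f(c) = \frac{\rho_r}{\sqrt{2\pi\theta_r}} e^{-c^2/(2\theta_r)}$ for $c < 0$. Then, with $\theta = \sqrt{\theta_l\theta_r}$ the temperature of $f$, we have $2\theta < \theta_r$ and $\int_{\mathbb{R}} f(c)^2 \exp\!\big(\tfrac{c^2}{2\theta}\big)\,dc = \infty$;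 i.e., the Grad expansion of the free-molecular solution around its local Maxwellian diverges whenever the wall temperature ratio exceeds $4$. -/
/-!
On `c < 0` the distribution is the Maxwellian of the hot wall, `f c = A exp (-c² / (2θr))`, so
`f c ² exp (c² / (2θ)) = A² exp (c² (1 / (2θ) - 1 / θr)) ≥ A²` as soon as `2θ ≤ θr`, which is
exactly `θr ≥ 4θl` for `θ = √(θl θr)`. A positive constant has infinite integral over a half-line.
-/

open MeasureTheory Real

lemma two_mul_sqrt_mul_lt {a b : ℝ} (ha : 0 < a) (hab : 4 * a < b) : 2 * √(a * b) < b := by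
  have hb : 0 < b := by linarith
  have : √(a * b) < b / 2 := (sqrt_lt' (by positivity)).2 (by nlinarith)
  linarith

lemma sq_le_sq_mul_exp_mul_exp {A T θ : ℝ} (hθ : 0 < θ) (hT : 2 * θ ≤ T) (c : ℝ) :
    A ^ 2 ≤ (A * exp (-c ^ 2 / (2 * T))) ^ 2 * exp (c ^ 2 / (2 * θ)) := by
  have hexp : (A * exp (-c ^ 2 / (2 * T))) ^ 2 * exp (c ^ 2 / (2 * θ))
      = A ^ 2 * exp (c ^ 2 / (2 * θ) - c ^ 2 / T) := by
    rw [mul_pow, ← exp_nat_mul, mul_assoc, ← exp_add]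
    congr 2
    field_simp
    ring
  have hexponent : c ^ 2 / T ≤ c ^ 2 / (2 * θ) :=
    div_le_div_of_nonneg_left (sq_nonneg c) (by positivity) hT
  rw [hexp]
  exact le_mul_of_one_le_right (sq_nonneg A) (one_le_exp (by linarith))

lemma lintegral_ofReal_eq_top_of_le {α : Type*} [MeasurableSpace α] {μ : Measure α}
    {s : Set α} (hs : MeasurableSet s) (hμs : μ s = ⊤) {g : α → ℝ} {K : ℝ} (hK : 0 < K)
    (hKg : ∀ x ∈ s, K ≤ g x) : ∫⁻ x, ENNReal.ofReal (g x) ∂μ = ⊤ := by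
  refine eq_top_iff.2 ?_
  calc (⊤ : ENNReal) = ∫⁻ _ in s, ENNReal.ofReal K ∂μ := by
        rw [setLIntegral_const, hμs, ENNReal.mul_top (by simpa using hK)]
    _ ≤ ∫⁻ x in s, ENNReal.ofReal (g x) ∂μ :=
        setLIntegral_mono' hs fun x hx => ENNReal.ofReal_le_ofReal (hKg x hx)
    _ ≤ ∫⁻ x, ENNReal.ofReal (g x) ∂μ := setLIntegral_le_lintegral _ _

theorem free_molecular_grad_divergence_general
    (θl θr : ℝ) (hθl : 0 < θl) (hθr : 4 * θl < θr)
    (ρr : ℝ)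
    (hρr : ρr = 2 * Real.sqrt θl / (Real.sqrt θl + Real.sqrt θr))
    (f : ℝ → ℝ)
    (hfn : ∀ c : ℝ, c < 0 →
        f c = ρr / Real.sqrt (2 * Real.pi * θr) * Real.exp (-c ^ 2 / (2 * θr))) :
    2 * Real.sqrt (θl * θr) < θr ∧
    (∫⁻ c : ℝ, ENNReal.ofReal
        (f c ^ 2 * Real.exp (c ^ 2 / (2 * Real.sqrt (θl * θr))))) = ⊤ := by
  have hθ : 2 * √(θl * θr) < θr := two_mul_sqrt_mul_lt hθl hθr
  have hθr_pos : 0 < θr := by linarith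
  have hρr_pos : 0 < ρr := by
    rw [hρr]
    have := sqrt_pos.2 hθl
    positivity
  refine ⟨hθ, lintegral_ofReal_eq_top_of_le (measurableSet_Iio (a := 0)) volume_Iio
    (K := (ρr / √(2 * π * θr)) ^ 2) (by positivity) fun c hc => ?_⟩
  rw [hfn c hc]
  exact sq_le_sq_mul_exp_mul_exp (sqrt_pos.2 (by positivity)) hθ.le c

/-- **Divergence of the Grad expansion in the free-molecular Fourier problem.** If the wall
temperature ratio exceeds `4` (`θ_r > 4θ_l`), then the temperature `θ = √(θ_l θ_r)` of the
free-molecular solution satisfies `2θ < θ_r`, and the Grad expansion of the solution around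
its local Maxwellian diverges: `∫ f² exp(c²/(2θ)) dc = ∞`. -/
theorem free_molecular_grad_divergence
    (θl θr : ℝ) (hθl : 0 < θl) (hθr : 4 * θl < θr)
    (ρl ρr : ℝ)
    (hρl : ρl = 2 * Real.sqrt θr / (Real.sqrt θl + Real.sqrt θr))
    (hρr : ρr = 2 * Real.sqrt θl / (Real.sqrt θl + Real.sqrt θr))
    (f : ℝ → ℝ)
    (hfp : ∀ c : ℝ, 0 < c →
        f c = ρl / Real.sqrt (2 * Real.pi * θl) * Real.exp (-c ^ 2 / (2 * θl)))
    (hfn : ∀ c : ℝ, c < 0 →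
        f c = ρr / Real.sqrt (2 * Real.pi * θr) * Real.exp (-c ^ 2 / (2 * θr))) :
    2 * Real.sqrt (θl * θr) < θr ∧
    (∫⁻ c : ℝ, ENNReal.ofReal
        (f c ^ 2 * Real.exp (c ^ 2 / (2 * Real.sqrt (θl * θr))))) = ⊤ :=
  free_molecular_grad_divergence_general θl θr hθl hθr ρr hρr f hfn
end
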